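/- arXiv:0808.0977 — 2 statements merged into one kernel-verified Lean document; each statement's English description precedes it below -/
import Mathlib

section
/- Let A be a real symmetric p×p matrix with A_{ii} = 1 for all i and |A_{ij}| < 1 for all i ≠ j. If β ∈ ℝ^p satisfies βᵀAβ = 1 and ‖β‖_{L1} ≤ 1, then β is a signed standard basis vector: there exists an index i such that β = e_i or β = −e_i, where e_i is the i-th standard basis vector of ℝ^p. -/
open Matrix BigOperators

/-!
Bounding every entry of `A` by one in absolute value gives
`βᵀ A β ≤ ∑ i, ∑ j, |A i j| |β i| |β j| ≤ (∑ i, |β i|) ^ 2 ≤ 1`, so the hypothesis `βᵀ A β = 1`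
forces equality throughout. Equality in the middle step kills every product `β i β j` with
`|A i j| < 1`, i.e. with `i ≠ j`, so `β` has a single nonzero entry `c`, and then
`1 = βᵀ A β = c ^ 2 A i i = c ^ 2`.
-/

theorem dotProduct_mulVec_add_sum_le_sq_sum_abs {n : Type*} [Fintype n]
    (A : Matrix n n ℝ) (β : n → ℝ) :
    β ⬝ᵥ A *ᵥ β + ∑ i, ∑ j, (1 - |A i j|) * (|β i| * |β j|) ≤ (∑ i, |β i|) ^ 2 := by
  have hquad : β ⬝ᵥ A *ᵥ β = ∑ i, ∑ j, β i * A i j * β j := by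
    simp only [dotProduct, mulVec, Finset.mul_sum, mul_assoc]
  rw [hquad, sq, Finset.sum_mul_sum, ← Finset.sum_add_distrib]
  refine Finset.sum_le_sum fun i _ => ?_
  rw [← Finset.sum_add_distrib]
  refine Finset.sum_le_sum fun j _ => ?_
  have hterm : β i * A i j * β j ≤ |A i j| * (|β i| * |β j|) := by
    calc β i * A i j * β j ≤ |β i * A i j * β j| := le_abs_self _
      _ = |A i j| * (|β i| * |β j|) := by rw [abs_mul, abs_mul]; ring
  linarith

theorem mul_eq_zero_of_dotProduct_mulVec_eq_one {n : Type*} [Fintype n]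
    (A : Matrix n n ℝ) (hA : ∀ i j, |A i j| ≤ 1) (β : n → ℝ)
    (hβA : β ⬝ᵥ A *ᵥ β = 1) (hβ : ∑ i, |β i| ≤ 1) {i j : n} (hij : |A i j| < 1) :
    β i * β j = 0 := by
  have hnonneg : ∀ i j, 0 ≤ (1 - |A i j|) * (|β i| * |β j|) := fun i j =>
    mul_nonneg (sub_nonneg.2 (hA i j)) (by positivity)
  have hsum : ∑ i, ∑ j, (1 - |A i j|) * (|β i| * |β j|) = 0 := by
    have := dotProduct_mulVec_add_sum_le_sq_sum_abs A β
    have : 0 ≤ ∑ i, |β i| := Finset.sum_nonneg fun i _ => abs_nonneg (β i)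
    have : 0 ≤ ∑ i, ∑ j, (1 - |A i j|) * (|β i| * |β j|) :=
      Finset.sum_nonneg fun i _ => Finset.sum_nonneg fun j _ => hnonneg i j
    nlinarith
  have hterm : (1 - |A i j|) * (|β i| * |β j|) = 0 := by
    rw [Finset.sum_eq_zero_iff_of_nonneg fun i _ => Finset.sum_nonneg fun j _ => hnonneg i j]
      at hsum
    exact (Finset.sum_eq_zero_iff_of_nonneg fun j _ => hnonneg i j).1
      (hsum i (Finset.mem_univ i)) j (Finset.mem_univ j)
  rw [← abs_eq_zero, abs_mul]
  exact (mul_eq_zero.1 hterm).resolve_left (by linarith)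

theorem exists_eq_single_of_mul_eq_zero {ι R : Type*} [DecidableEq ι] [MulZeroClass R]
    [NoZeroDivisors R] {β : ι → R} (hβ : β ≠ 0) (h : ∀ i j, i ≠ j → β i * β j = 0) :
    ∃ i, β = Pi.single i (β i) := by
  obtain ⟨i, hi⟩ := Function.ne_iff.1 hβ
  refine ⟨i, funext fun j => ?_⟩
  rcases eq_or_ne j i with rfl | hji
  · simp
  · rw [Pi.single_eq_of_ne hji]
    exact (mul_eq_zero.1 (h j i hji)).resolve_right hi

theorem single_dotProduct_mulVec_single {n R : Type*} [Fintype n] [DecidableEq n]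
    [NonUnitalNonAssocSemiring R] (A : Matrix n n R) (i : n) (c : R) :
    Pi.single i c ⬝ᵥ A *ᵥ Pi.single i c = c * (A i i * c) := by
  rw [mulVec_single, single_dotProduct]
  rfl

theorem stmt_1_general {p : ℕ} (A : Matrix (Fin p) (Fin p) ℝ)
    (hdiag : ∀ i, A i i = 1) (hoff : ∀ i j, i ≠ j → |A i j| < 1)
    (β : Fin p → ℝ) (h1 : β ⬝ᵥ A.mulVec β = 1) (h2 : ∑ i, |β i| ≤ 1) :
    ∃ i : Fin p, β = Pi.single i 1 ∨ β = Pi.single i (-1) := by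
  have hA : ∀ i j, |A i j| ≤ 1 := fun i j => by
    rcases eq_or_ne i j with rfl | hij
    · rw [hdiag, abs_one]
    · exact (hoff i j hij).le
  have hβ0 : β ≠ 0 := by
    rintro rfl
    simp at h1
  obtain ⟨i, hi⟩ := exists_eq_single_of_mul_eq_zero hβ0 fun i j hij =>
    mul_eq_zero_of_dotProduct_mulVec_eq_one A hA β h1 h2 (hoff i j hij)
  rw [hi, single_dotProduct_mulVec_single, hdiag, one_mul, mul_self_eq_one_iff] at h1
  rcases h1 with hc | hc <;> rw [hc] at hi
  exacts [⟨i, .inl hi⟩, ⟨i, .inr hi⟩]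

/-- If `A` is a real symmetric `p × p` matrix with unit diagonal and all
off-diagonal entries strictly less than 1 in absolute value, then any `β` with
`βᵀ A β = 1` and `‖β‖_{L1} ≤ 1` is a signed standard basis vector. -/
theorem stmt_1 {p : ℕ} (A : Matrix (Fin p) (Fin p) ℝ) (hsym : A.IsSymm)
    (hdiag : ∀ i, A i i = 1) (hoff : ∀ i j, i ≠ j → |A i j| < 1)
    (β : Fin p → ℝ) (h1 : β ⬝ᵥ A.mulVec β = 1) (h2 : ∑ i, |β i| ≤ 1) :
    ∃ i : Fin p, β = Pi.single i 1 ∨ β = Pi.single i (-1) :=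
  stmt_1_general A hdiag hoff β h1 h2
end

section
/- Let (Ω, m₀, μ) be a probability space, m ≤ m₀ a sub-σ-algebra, and Z a square-integrable real random variable with Var(μ[Z|m]) > 0. Then Var(μ[Z|m]) is the greatest element of the set { Cov(Z, T)² / Var(T) : T a square-integrable, m-measurable real random variable with Var(T) > 0 }; in particular the maximum is attained at T = μ[Z|m], for which Cov(Z, μ[Z|m]) = Var(μ[Z|m]). Consequently, if also Var(Z) > 0, the supremum of the squared correlations Corr²(Z, T) = Cov(Z,T)²/(Var(Z)Var(T)) over such T equals Var(μ[Z|m]) / Var(Z). -/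
/-!
Write `Y = μ[Z|m]`. For `m`-measurable `T ∈ L²` the pull-out property gives `E[ZT] = E[YT]`, and
`E[Z] = E[Y]`, so `Cov(Z, T) = Cov(Y, T)`. Cauchy–Schwarz then bounds `Cov(Z, T)² / Var(T)` by
`Var(Y)`, with equality at `T = Y` since `Cov(Z, Y) = Var(Y)`.
-/

open MeasureTheory ProbabilityTheory

/-- The covariance `Cov(X, Y) = E[XY] − E[X]E[Y]` of two real random variables. -/
noncomputable def cov {Ω : Type*} [MeasurableSpace Ω] (μ : Measure Ω) (X Y : Ω → ℝ) : ℝ :=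
  (∫ ω, X ω * Y ω ∂μ) - (∫ ω, X ω ∂μ) * (∫ ω, Y ω ∂μ)

section

variable {Ω : Type*} {m m₀ : MeasurableSpace Ω} {μ : Measure Ω}

lemma integral_mul_sq_le_integral_sq_mul_integral_sq {f g : Ω → ℝ} (hf : MemLp f 2 μ)
    (hg : MemLp g 2 μ) :
    (∫ ω, f ω * g ω ∂μ) ^ 2 ≤ (∫ ω, f ω ^ 2 ∂μ) * ∫ ω, g ω ^ 2 ∂μ := by
  have inner_toLp {u v : Ω → ℝ} (hu : MemLp u 2 μ) (hv : MemLp v 2 μ) :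
      inner ℝ (hu.toLp u) (hv.toLp v) = ∫ ω, u ω * v ω ∂μ := by
    rw [L2.inner_def]
    refine integral_congr_ae ?_
    filter_upwards [hu.coeFn_toLp, hv.coeFn_toLp] with ω hu hv
    simp [hu, hv, mul_comm]
  have h := real_inner_mul_inner_self_le (hf.toLp f) (hg.toLp g)
  simpa only [inner_toLp, ← sq] using h

lemma covariance_sq_le_variance_mul_variance [IsFiniteMeasure μ] {X Y : Ω → ℝ}
    (hX : MemLp X 2 μ) (hY : MemLp Y 2 μ) :
    cov[X, Y; μ] ^ 2 ≤ Var[X; μ] * Var[Y; μ] := by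
  rw [← covariance_self hX.aemeasurable, ← covariance_self hY.aemeasurable]
  simpa only [covariance, Pi.sub_apply, ← sq] using integral_mul_sq_le_integral_sq_mul_integral_sq
    (hX.sub (memLp_const μ[X])) (hY.sub (memLp_const μ[Y]))

lemma cov_eq_covariance [IsProbabilityMeasure μ] {X Y : Ω → ℝ} (hX : MemLp X 2 μ)
    (hY : MemLp Y 2 μ) : cov μ X Y = cov[X, Y; μ] :=
  (covariance_eq_sub hX hY).symm

lemma covariance_condExp_left [IsProbabilityMeasure μ] (hm : m ≤ m₀) {Z T : Ω → ℝ}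
    (hZ : MemLp Z 2 μ) (hT : MemLp T 2 μ) (hTm : StronglyMeasurable[m] T) :
    cov[μ[Z|m], T; μ] = cov[Z, T; μ] := by
  have hmul : μ[μ[Z|m] * T] = μ[Z * T] := by
    rw [← integral_condExp hm (f := Z * T)]
    exact integral_congr_ae
      (condExp_mul_of_stronglyMeasurable_right hTm (hZ.integrable_mul hT)
        (hZ.integrable one_le_two)).symm
  rw [covariance_eq_sub (hZ.condExp one_le_two) hT, covariance_eq_sub hZ hT, hmul,
    integral_condExp hm]

end

/-- For a probability space `(Ω, m₀, μ)`, a sub-σ-algebra `m ≤ m₀`, and a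
square-integrable real random variable `Z` with `Var(μ[Z|m]) > 0`, the quantity
`Var(μ[Z|m])` is the greatest element of `{Cov(Z, T)²/Var(T)}` over square-integrable
`m`-measurable `T` with `Var(T) > 0`; the maximum is attained at `T = μ[Z|m]`, for which
`Cov(Z, μ[Z|m]) = Var(μ[Z|m])`; and if moreover `Var(Z) > 0`, the supremum of the squared
correlations `Corr²(Z, T)` over such `T` equals `Var(μ[Z|m]) / Var(Z)`. -/
theorem stmt_4 {Ω : Type*} (m : MeasurableSpace Ω) {m₀ : MeasurableSpace Ω}
    (hm : m ≤ m₀) (μ : Measure Ω) [IsProbabilityMeasure μ] (Z : Ω → ℝ)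
    (hZ : MemLp Z 2 μ) (hvar : 0 < variance (μ[Z|m]) μ) :
    IsGreatest
      {r : ℝ | ∃ T : Ω → ℝ, MemLp T 2 μ ∧ StronglyMeasurable[m] T ∧ 0 < variance T μ ∧
        r = cov μ Z T ^ 2 / variance T μ}
      (variance (μ[Z|m]) μ) ∧
    cov μ Z (μ[Z|m]) = variance (μ[Z|m]) μ ∧
    (0 < variance Z μ →
      sSup {r : ℝ | ∃ T : Ω → ℝ, MemLp T 2 μ ∧ StronglyMeasurable[m] T ∧ 0 < variance T μ ∧
          r = cov μ Z T ^ 2 / (variance Z μ * variance T μ)}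
        = variance (μ[Z|m]) μ / variance Z μ) := by
  set Y := μ[Z|m]
  have hY : MemLp Y 2 μ := hZ.condExp one_le_two
  have hYm : StronglyMeasurable[m] Y := stronglyMeasurable_condExp
  have hcov : cov μ Z Y = Var[Y; μ] := by
    rw [cov_eq_covariance hZ hY, ← covariance_condExp_left hm hZ hY hYm,
      covariance_self hY.aemeasurable]
  have hbound {T : Ω → ℝ} (hT : MemLp T 2 μ) (hTm : StronglyMeasurable[m] T) :
      cov μ Z T ^ 2 ≤ Var[Y; μ] * Var[T; μ] := by
    rw [cov_eq_covariance hZ hT, ← covariance_condExp_left hm hZ hT hTm]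
    exact covariance_sq_le_variance_mul_variance hY hT
  refine ⟨⟨⟨Y, hY, hYm, hvar, by rw [hcov]; field_simp⟩, ?_⟩, hcov, fun hZvar => ?_⟩
  · rintro r ⟨T, hT, hTm, hTvar, rfl⟩
    exact div_le_of_le_mul₀ hTvar.le hvar.le (hbound hT hTm)
  refine IsGreatest.csSup_eq ⟨⟨Y, hY, hYm, hvar, by rw [hcov]; field_simp⟩, ?_⟩
  rintro r ⟨T, hT, hTm, hTvar, rfl⟩
  rw [div_le_div_iff₀ (by positivity) hZvar]
  linarith [mul_le_mul_of_nonneg_right (hbound hT hTm) hZvar.le]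
end
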